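/- arXiv:2006.08731 — 4 statements merged into one kernel-verified Lean document; each statement's English description precedes it below -/
import Mathlib

section
/- Let k, n be positive integers, y : Fin k → ℕ with 1 ≤ y i ≤ n for all i, and p : Fin k → ℕ priorities. Consider binary variables z : Fin k → Fin k → ℕ with z i j ∈ {0,1} subject to the linking constraints (y i : ℤ) − (y j : ℤ) ≤ (n − 1) · (z i j) for all pairs (i,j) with p i > p j. Then the minimum of Σ_{(i,j) : p i > p j} z i j over all such feasible z equals the number of priority inversions of (y,p), i.e. the cardinality of {(i,j) | y i > y j ∧ p i > p j}; in particular this number is the least element of the set of attainable sums. -/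
/-- The minimum of Σ z_{ij} over binary variables z subject to the MIP linking
constraints y_i − y_j ≤ (n−1)·z_{ij} (for pairs with p_i > p_j) equals the
number of priority inversions of (y, p). -/
theorem mip_inversion_linking (k n : ℕ) (hk : 0 < k) (hn : 0 < n)
    (y p : Fin k → ℕ) (hy : ∀ i, 1 ≤ y i ∧ y i ≤ n) :
    IsLeast
      { s : ℕ | ∃ z : Fin k → Fin k → ℕ,
          (∀ i j, z i j ≤ 1) ∧
          (∀ i j, p i > p j → (y i : ℤ) - (y j : ℤ) ≤ ((n : ℤ) - 1) * (z i j : ℤ)) ∧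
          s = ∑ ij ∈ Finset.univ.filter
              (fun ij : Fin k × Fin k => p ij.1 > p ij.2), z ij.1 ij.2 }
      ((Finset.univ.filter
        (fun ij : Fin k × Fin k => y ij.1 > y ij.2 ∧ p ij.1 > p ij.2)).card) := by
  constructor
  · refine ⟨fun i j => if y i > y j then 1 else 0, ?_, ?_, ?_⟩
    · intro i j; dsimp only; split <;> simp
    · intro i j _
      by_cases h : y i > y j
      · simp only [h, if_true, Nat.cast_one, mul_one]
        have h1 := (hy i).2
        have h2 := (hy j).1
        omega
      · simp only [h, if_false, Nat.cast_zero, mul_zero]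
        omega
    · rw [Finset.card_filter, Finset.sum_filter]
      apply Finset.sum_congr rfl
      intro ij _
      by_cases h1 : p ij.1 > p ij.2 <;> by_cases h2 : y ij.1 > y ij.2 <;>
        simp [h1, h2]
  · rintro s ⟨z, hz01, hlink, rfl⟩
    have key : ∀ ij ∈ Finset.univ.filter
        (fun ij : Fin k × Fin k => y ij.1 > y ij.2 ∧ p ij.1 > p ij.2),
        z ij.1 ij.2 = 1 := by
      rintro ⟨i, j⟩ hij
      simp only [Finset.mem_filter, Finset.mem_univ, true_and] at hij
      obtain ⟨hyij, hpij⟩ := hij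
      have := hlink i j hpij
      have hz := hz01 i j
      have h1 := (hy i).2
      have h2 := (hy j).1
      rcases Nat.le_one_iff_eq_zero_or_eq_one.mp hz with h0 | h1
      · exfalso
        rw [h0] at this
        push_cast at this
        omega
      · exact h1
    calc (Finset.univ.filter
        (fun ij : Fin k × Fin k => y ij.1 > y ij.2 ∧ p ij.1 > p ij.2)).card
        = ∑ ij ∈ Finset.univ.filter
            (fun ij : Fin k × Fin k => y ij.1 > y ij.2 ∧ p ij.1 > p ij.2),
            z ij.1 ij.2 := by
          rw [Finset.sum_congr rfl key]; simp
      _ ≤ _ := by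
          apply Finset.sum_le_sum_of_subset
          intro ij; simp only [Finset.mem_filter, Finset.mem_univ, true_and]
          tauto
end

section
/- Let k, n, m be positive integers, and for orders Fin k let y : Fin k → Fin n be period assignments, d : Fin k → ℕ demands, t : Fin k → Fin m product types, and p : Fin k → ℕ priorities. Suppose i ≠ j are orders with d i = d j, t i = t j, p i ≥ p j, and y i > y j, and let y' = y ∘ (swap i j) be the assignment obtained by exchanging the periods of i and j. Then: (a) for every period b and every product type τ, the sum of d l over orders l with y' l = b and t l = τ equals the sum of d l over orders l with y l = b and t l = τ (hence all per-period and per-product loads, and thus the leveling objectives, are unchanged); and (b) the number of priority inversions of (y', p) is at most the number of priority inversions of (y, p). -/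
/-!
Exchanging the periods of `i` and `j` is a permutation of the orders that fixes demands and
product types, so the loads do not change. For the inversions, send a pair that is an inversion
after the swap but not before to its image under the swap: this is an injection into the
inversions that disappear, so the swap destroys at least as many inversions as it creates.
-/

open Finset Equiv

theorem sum_filter_comp_perm {α β γ M : Type*} [Fintype α] [DecidableEq β] [DecidableEq γ]
    [AddCommMonoid M] (σ : Perm α) (y : α → β) {d : α → M} {t : α → γ}
    (hd : ∀ l, d (σ l) = d l) (ht : ∀ l, t (σ l) = t l) (b : β) (τ : γ) :
    ∑ l ∈ univ.filter (fun l => y (σ l) = b ∧ t l = τ), d l =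
      ∑ l ∈ univ.filter (fun l => y l = b ∧ t l = τ), d l := by
  rw [sum_filter, sum_filter,
    ← Equiv.sum_comp σ (fun l => if y l = b ∧ t l = τ then d l else 0)]
  simp only [hd, ht]

section

variable {α β γ : Type*} [DecidableEq α] [LinearOrder β] [LinearOrder γ]
  {y : α → β} {p : α → γ} {i j : α}

theorem lt_apply_swap_of_lt_apply_swap (hy : y j < y i) (hp : p j ≤ p i) {a b : α}
    (hy_swap : y (swap i j b) < y (swap i j a)) (hy_ab : y a ≤ y b) (hp_ab : p b < p a) :
    p (swap i j b) < p (swap i j a) := by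
  -- If the swap fixes `a` and `b`, or `a = b`, then `hy_swap` contradicts `hy_ab`; for `(a, b)`
  -- of the form `(i, j)`, `(i, l)` or `(l, j)` they contradict `hy`, `(j, i)` contradicts `hp`,
  -- and for `(j, l)` or `(l, i)` the goal follows from `hp`.
  grind

variable [Fintype α]

def inversions (y : α → β) (p : α → γ) : Finset (α × α) :=
  univ.filter fun ll => y ll.1 > y ll.2 ∧ p ll.1 > p ll.2

theorem swap_mem_inversions_sdiff (hy : y j < y i) (hp : p j ≤ p i) {q : α × α}
    (hq : q ∈ inversions (y ∘ swap i j) p \ inversions y p) :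
    Prod.map (swap i j) (swap i j) q ∈ inversions y p \ inversions (y ∘ swap i j) p := by
  obtain ⟨a, b⟩ := q
  simp only [inversions, mem_sdiff, mem_filter, mem_univ, true_and, Function.comp_apply,
    Prod.map_fst, Prod.map_snd, swap_apply_self, not_and, gt_iff_lt] at hq ⊢
  obtain ⟨⟨hy_swap, hp_ab⟩, hnot⟩ := hq
  have hy_ab : y a ≤ y b := not_lt.mp fun h => hnot h hp_ab
  exact ⟨⟨hy_swap, lt_apply_swap_of_lt_apply_swap hy hp hy_swap hy_ab hp_ab⟩,
    fun h => absurd h (not_lt.mpr hy_ab)⟩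

theorem card_inversions_comp_swap_le (hy : y j < y i) (hp : p j ≤ p i) :
    #(inversions (y ∘ swap i j) p) ≤ #(inversions y p) := by
  rw [← card_sdiff_le_card_sdiff_iff]
  exact card_le_card_of_injOn (Prod.map (swap i j) (swap i j))
    (fun _ hq => swap_mem_inversions_sdiff hy hp hq)
    ((swap i j).injective.prodMap (swap i j).injective).injOn

end

theorem swap_dominance_general (k n m : ℕ)
    (y : Fin k → Fin n) (d : Fin k → ℕ) (t : Fin k → Fin m) (p : Fin k → ℕ)
    (i j : Fin k) (hd : d i = d j) (ht : t i = t j)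
    (hp : p i ≥ p j) (hy : y i > y j)
    (y' : Fin k → Fin n) (hy' : y' = y ∘ (Equiv.swap i j)) :
    (∀ (b : Fin n) (τ : Fin m),
      ∑ l ∈ Finset.univ.filter (fun l => y' l = b ∧ t l = τ), d l =
      ∑ l ∈ Finset.univ.filter (fun l => y l = b ∧ t l = τ), d l) ∧
    (Finset.univ.filter
        (fun ll : Fin k × Fin k => y' ll.1 > y' ll.2 ∧ p ll.1 > p ll.2)).card ≤
      (Finset.univ.filter
        (fun ll : Fin k × Fin k => y ll.1 > y ll.2 ∧ p ll.1 > p ll.2)).card := by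
  subst hy'
  exact ⟨sum_filter_comp_perm _ y (apply_swap_eq_self hd) (apply_swap_eq_self ht),
    card_inversions_comp_swap_le hy hp⟩

/-- Dominance rule justifying the symmetry-breaking constraint of the MIP
model: swapping the periods of two orders with equal demand and product type,
where the higher-prioritized one is planned later, leaves all per-period,
per-product loads unchanged and does not increase the number of priority
inversions. -/
theorem swap_dominance (k n m : ℕ) (hk : 0 < k) (hn : 0 < n) (hm : 0 < m)
    (y : Fin k → Fin n) (d : Fin k → ℕ) (t : Fin k → Fin m) (p : Fin k → ℕ)
    (i j : Fin k) (hij : i ≠ j) (hd : d i = d j) (ht : t i = t j)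
    (hp : p i ≥ p j) (hy : y i > y j)
    (y' : Fin k → Fin n) (hy' : y' = y ∘ (Equiv.swap i j)) :
    (∀ (b : Fin n) (τ : Fin m),
      ∑ l ∈ Finset.univ.filter (fun l => y' l = b ∧ t l = τ), d l =
      ∑ l ∈ Finset.univ.filter (fun l => y l = b ∧ t l = τ), d l) ∧
    (Finset.univ.filter
        (fun ll : Fin k × Fin k => y' ll.1 > y' ll.2 ∧ p ll.1 > p ll.2)).card ≤
      (Finset.univ.filter
        (fun ll : Fin k × Fin k => y ll.1 > y ll.2 ∧ p ll.1 > p ll.2)).card :=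
  swap_dominance_general k n m y d t p i j hd ht hp hy y' hy'
end

section
/- Let n be a positive natural number, d* a positive real number, and w : Fin n → ℝ with w i ≥ 0 for all i and Σ_i w i = n · d*. Then Σ_i |d* − w i| ≤ 2·(n − 1)·d*. In particular the normalized leveling objective g1 = (1/(n·d*)) · Σ_i |d* − w i| satisfies g1 ≤ 2(n−1)/n < 2. -/
/-- Bound on the leveling objective: if the per-period loads w are nonnegative
and sum to n·d*, then the total deviation from the target d* is at most
2·(n−1)·d*. -/
theorem leveling_deviation_bound (n : ℕ) (hn : 0 < n) (dstar : ℝ)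
    (hd : 0 < dstar) (w : Fin n → ℝ) (hw : ∀ i, 0 ≤ w i)
    (hsum : ∑ i, w i = n * dstar) :
    ∑ i, |dstar - w i| ≤ 2 * (n - 1 : ℝ) * dstar := by
  -- there is an index j with dstar ≤ w j
  have hne : (Finset.univ : Finset (Fin n)).Nonempty := by
    simpa [Finset.univ_nonempty_iff] using Fin.pos_iff_nonempty.mp hn
  obtain ⟨j, -, hj⟩ : ∃ i ∈ Finset.univ, dstar ≤ w i := by
    apply Finset.exists_le_of_sum_le hne
    simp [hsum, Finset.card_univ]
  -- pointwise identity: |d - w i| = (d - w i) + 2 * max (w i - d) 0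
  have hpt : ∀ i, |dstar - w i| = (dstar - w i) + 2 * max (w i - dstar) 0 := by
    intro i
    rcases le_total (w i) dstar with h | h
    · rw [abs_of_nonneg (by linarith), max_eq_right (by linarith)]; ring
    · rw [abs_of_nonpos (by linarith), max_eq_left (by linarith)]; ring
  calc ∑ i, |dstar - w i|
      = ∑ i, ((dstar - w i) + 2 * max (w i - dstar) 0) := by
        exact Finset.sum_congr rfl fun i _ => hpt i
    _ = (∑ i, (dstar - w i)) + 2 * ∑ i, max (w i - dstar) 0 := by
        rw [Finset.sum_add_distrib, Finset.mul_sum]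
    _ = 2 * ∑ i, max (w i - dstar) 0 := by
        rw [Finset.sum_sub_distrib, hsum]
        simp [Finset.card_univ]
    _ ≤ 2 * ∑ i, (w i - if i = j then dstar else 0) := by
        apply mul_le_mul_of_nonneg_left _ (by norm_num)
        apply Finset.sum_le_sum
        intro i _
        by_cases h : i = j
        · subst h; simp [max_le_iff]; linarith
        · simp [h, max_le_iff, hw i]; linarith [hw i, hd.le]
    _ = 2 * ((n : ℝ) * dstar - dstar) := by
        rw [Finset.sum_sub_distrib, hsum, Finset.sum_ite_eq' Finset.univ j]
        simp
    _ ≤ 2 * (n - 1 : ℝ) * dstar := by ring_nf; linarith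
end

section
/- Let k be a natural number, y : Fin k → ℕ an assignment of orders to periods and p : Fin k → ℕ priorities. Let o be an order, let i = y o, let b be a period with i < b, and let y' = Function.update y o b be the assignment obtained by moving order o to period b. Then f3(y',p) + |{l ≠ o : p l > p o ∧ i < y l ≤ b}| = f3(y,p) + |{l ≠ o : p o > p l ∧ i ≤ y l < b}|, where f3 denotes the number of priority inversions; i.e., the change in the number of inversions caused by the move equals the number of newly created inversions with orders in periods from i up to (excluding) b minus the number of resolved inversions with orders in periods strictly after i up to b. -/
/-- Turn a count over single orders into a count over pairs with second
component fixed to `o`. -/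
lemma sum_snd_eq_o {k : ℕ} (o : Fin k) (Q : Fin k → Prop) [DecidablePred Q] :
    ∑ l : Fin k, (if Q l then (1 : ℕ) else 0) =
    ∑ ll : Fin k × Fin k, (if ll.2 = o ∧ Q ll.1 then (1 : ℕ) else 0) := by
  rw [Fintype.sum_prod_type]
  refine Finset.sum_congr rfl fun a _ => ?_
  simp only [ite_and]
  rw [Finset.sum_ite_eq' Finset.univ o (fun _ => if Q a then (1:ℕ) else 0)]
  simp

/-- Same with first component fixed to `o`. -/
lemma sum_fst_eq_o {k : ℕ} (o : Fin k) (Q : Fin k → Prop) [DecidablePred Q] :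
    ∑ l : Fin k, (if Q l then (1 : ℕ) else 0) =
    ∑ ll : Fin k × Fin k, (if ll.1 = o ∧ Q ll.2 then (1 : ℕ) else 0) := by
  rw [Fintype.sum_prod_type_right]
  refine Finset.sum_congr rfl fun a _ => ?_
  simp only [ite_and]
  rw [Finset.sum_ite_eq' Finset.univ o (fun _ => if Q a then (1:ℕ) else 0)]
  simp

/-- Delta evaluation of the priority objective: moving order o from its period
i = y o to a later period b changes the number of priority inversions by the
number of newly created inversions with orders in periods from i up to
(excluding) b minus the number of resolved inversions with orders in periods
strictly after i up to b. -/
theorem move_order_inversion_delta (k : ℕ) (y p : Fin k → ℕ) (o : Fin k)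
    (i b : ℕ) (hi : i = y o) (hib : i < b)
    (y' : Fin k → ℕ) (hy' : y' = Function.update y o b) :
    (Finset.univ.filter
        (fun ll : Fin k × Fin k => y' ll.1 > y' ll.2 ∧ p ll.1 > p ll.2)).card +
      (Finset.univ.filter
        (fun l : Fin k => l ≠ o ∧ p l > p o ∧ i < y l ∧ y l ≤ b)).card =
    (Finset.univ.filter
        (fun ll : Fin k × Fin k => y ll.1 > y ll.2 ∧ p ll.1 > p ll.2)).card +
      (Finset.univ.filter
        (fun l : Fin k => l ≠ o ∧ p o > p l ∧ i ≤ y l ∧ y l < b)).card := by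
  subst hy'
  simp only [Finset.card_filter]
  rw [sum_snd_eq_o o (fun l => l ≠ o ∧ p l > p o ∧ i < y l ∧ y l ≤ b),
      sum_fst_eq_o o (fun l => l ≠ o ∧ p o > p l ∧ i ≤ y l ∧ y l < b),
      ← Finset.sum_add_distrib, ← Finset.sum_add_distrib]
  refine Finset.sum_congr rfl fun ll _ => ?_
  rcases eq_or_ne ll.1 o with h1 | h1 <;> rcases eq_or_ne ll.2 o with h2 | h2 <;>
    simp [Function.update_apply, h1, h2] <;>
    split_ifs <;> omega
end
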